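/- Let Π : l⊗𝒜 → l⊗𝒜 be an 𝒜-linear Lie algebra automorphism with Π(u) − u ∈ l⊗m for all u ∈ l⊗𝒜 (a small automorphism), and suppose ξ satisfies the standard-deformation equation. Then: (1) Π_ξ := pr_a∘Π∘I_ξ : a⊗𝒜 → a⊗𝒜 is bijective; (2) the 𝒜-linear map Π▷ξ := pr_b∘Π∘I_ξ∘Π_ξ⁻¹ : a⊗𝒜 → b⊗𝒜 has image contained in b⊗m; (3) I_{Π▷ξ}∘Π_ξ = Π∘I_ξ; and (4) Π▷ξ satisfies the standard-deformation equation. (Thus ▷ gives a well-defined action of small automorphisms on standard deformations.) -/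

import Mathlib

open TensorProduct

noncomputable section

/-- The evaluation map id_V ⊗ ev : 𝒜 ⊗[K] V → V induced by ev : 𝒜 → K. -/
def evMap (K 𝒜 : Type) [Field K] [CommRing 𝒜] [Algebra K 𝒜]
    (ev : 𝒜 →ₐ[K] K) (V : Type) [AddCommGroup V] [Module K V] :
    𝒜 ⊗[K] V →ₗ[K] V :=
  (TensorProduct.lid K V).toLinearMap ∘ₗ LinearMap.rTensor V ev.toLinearMap

variable {K : Type} [Field K]
  {l : Type} [LieRing l] [LieAlgebra K l]
  {a : Type} [LieRing a] [LieAlgebra K a]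
  {b : Type} [AddCommGroup b] [Module K b]

/-- The map I_ξ := i + j∘ξ : a⊗𝒜 → l⊗𝒜. -/
def IxiMap (𝒜 : Type) [CommRing 𝒜] [Algebra K 𝒜]
    (i : a →ₗ⁅K⁆ l) (j : b →ₗ[K] l)
    (ξ : 𝒜 ⊗[K] a →ₗ[𝒜] 𝒜 ⊗[K] b) : 𝒜 ⊗[K] a →ₗ[𝒜] 𝒜 ⊗[K] l :=
  LinearMap.baseChange 𝒜 i.toLinearMap + (LinearMap.baseChange 𝒜 j) ∘ₗ ξ

/-- The standard-deformation equation for ξ: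
I_ξ(pr_a [I_ξ x, I_ξ y]) = [I_ξ x, I_ξ y] for all x, y ∈ a⊗𝒜. -/
def StdEq (𝒜 : Type) [CommRing 𝒜] [Algebra K 𝒜]
    (i : a →ₗ⁅K⁆ l) (j : b →ₗ[K] l) (prA : l →ₗ[K] a)
    (ξ : 𝒜 ⊗[K] a →ₗ[𝒜] 𝒜 ⊗[K] b) : Prop :=
  ∀ x y : 𝒜 ⊗[K] a,
    IxiMap 𝒜 i j ξ ((LinearMap.baseChange 𝒜 prA) ⁅IxiMap 𝒜 i j ξ x, IxiMap 𝒜 i j ξ y⁆)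
      = ⁅IxiMap 𝒜 i j ξ x, IxiMap 𝒜 i j ξ y⁆

section Aux

variable {𝒜 : Type} [CommRing 𝒜] [Algebra K 𝒜] (ev : 𝒜 →ₐ[K] K)

lemma evMap_tmul (V : Type) [AddCommGroup V] [Module K V] (c : 𝒜) (v : V) :
    evMap K 𝒜 ev V (c ⊗ₜ[K] v) = ev c • v := by
  simp [evMap]

lemma evMap_Asmul (V : Type) [AddCommGroup V] [Module K V] (r : 𝒜) (x : 𝒜 ⊗[K] V) :
    evMap K 𝒜 ev V (r • x) = ev r • evMap K 𝒜 ev V x := by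
  induction x using TensorProduct.induction_on with
  | zero => simp
  | tmul c v => rw [TensorProduct.smul_tmul', smul_eq_mul, evMap_tmul, evMap_tmul,
      map_mul, mul_smul]
  | add u w hu hw => rw [smul_add, map_add, hu, hw, map_add, smul_add]

lemma sub_one_tmul_mem (V : Type) [AddCommGroup V] [Module K V] (x : 𝒜 ⊗[K] V) :
    x - (1 : 𝒜) ⊗ₜ[K] (evMap K 𝒜 ev V x)
      ∈ ((RingHom.ker ev.toRingHom) • ⊤ : Submodule 𝒜 (𝒜 ⊗[K] V)) := by
  induction x using TensorProduct.induction_on with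
  | zero => simp
  | tmul c v =>
      have hmem : c - algebraMap K 𝒜 (ev c) ∈ RingHom.ker ev.toRingHom := by
        simp [RingHom.mem_ker]
      have heq : c ⊗ₜ[K] v - (1 : 𝒜) ⊗ₜ[K] (ev c • v)
          = (c - algebraMap K 𝒜 (ev c)) • ((1 : 𝒜) ⊗ₜ[K] v) := by
        rw [sub_smul (M := 𝒜 ⊗[K] V)]
        congr 1
        · rw [TensorProduct.smul_tmul', smul_eq_mul, mul_one]
        · rw [TensorProduct.smul_tmul', smul_eq_mul, mul_one,
            Algebra.algebraMap_eq_smul_one, TensorProduct.smul_tmul]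
      rw [evMap_tmul, heq]
      exact Submodule.smul_mem_smul hmem trivial
  | add u w hu hw =>
      have heq : (u + w) - (1 : 𝒜) ⊗ₜ[K] (evMap K 𝒜 ev V (u + w))
          = (u - (1 : 𝒜) ⊗ₜ[K] (evMap K 𝒜 ev V u))
            + (w - (1 : 𝒜) ⊗ₜ[K] (evMap K 𝒜 ev V w)) := by
        rw [map_add, TensorProduct.tmul_add]; abel
      rw [heq]
      exact add_mem hu hw

lemma mem_ker_evMap_iff (V : Type) [AddCommGroup V] [Module K V] (x : 𝒜 ⊗[K] V) :
    x ∈ LinearMap.ker (evMap K 𝒜 ev V)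
      ↔ x ∈ ((RingHom.ker ev.toRingHom) • ⊤ : Submodule 𝒜 (𝒜 ⊗[K] V)) := by
  constructor
  · intro hx
    have h := sub_one_tmul_mem ev V x
    rw [LinearMap.mem_ker] at hx
    rw [hx, TensorProduct.tmul_zero, sub_zero] at h
    exact h
  · intro hx
    rw [LinearMap.mem_ker]
    refine Submodule.smul_induction_on hx ?_ ?_
    · intro r hr y _
      rw [evMap_Asmul, show ev r = 0 from hr, zero_smul]
    · intro y z hy hz
      rw [map_add, hy, hz, add_zero]

lemma baseChange_mem_smul_top {V W : Type} [AddCommGroup V] [Module K V]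
    [AddCommGroup W] [Module K W] (f : V →ₗ[K] W) {x : 𝒜 ⊗[K] V}
    (hx : x ∈ ((RingHom.ker ev.toRingHom) • ⊤ : Submodule 𝒜 (𝒜 ⊗[K] V))) :
    LinearMap.baseChange 𝒜 f x
      ∈ ((RingHom.ker ev.toRingHom) • ⊤ : Submodule 𝒜 (𝒜 ⊗[K] W)) := by
  have h : LinearMap.baseChange 𝒜 f x ∈
      Submodule.map (LinearMap.baseChange 𝒜 f)
        ((RingHom.ker ev.toRingHom) • ⊤ : Submodule 𝒜 (𝒜 ⊗[K] V)) :=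
    Submodule.mem_map_of_mem hx
  rw [Submodule.map_smul''] at h
  exact SetLike.le_def.mp (smul_mono_right _ le_top) h

lemma pow_small {M : Type} [AddCommGroup M] [Module 𝒜 M] (I : Ideal 𝒜)
    (N : M →ₗ[𝒜] M) (hN : ∀ x, N x ∈ (I • ⊤ : Submodule 𝒜 M)) :
    ∀ k, ∀ x, (N ^ (k + 1)) x ∈ ((I ^ (k + 1)) • ⊤ : Submodule 𝒜 M) := by
  intro k
  induction k with
  | zero => intro x; simpa using hN x
  | succ k ih =>
      intro x
      have h1 : (N ^ (k + 2)) x = N ((N ^ (k + 1)) x) := by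
        rw [pow_succ']; rfl
      rw [h1]
      have h2 : N ((N ^ (k + 1)) x) ∈ (I ^ (k + 1)) • (I • (⊤ : Submodule 𝒜 M)) := by
        refine Submodule.smul_induction_on (ih x) ?_ ?_ (p := fun y => N y ∈ _)
        · intro r hr m _
          rw [map_smul]
          exact Submodule.smul_mem_smul hr (hN m)
        · intro y z hy hz
          rw [map_add]
          exact add_mem hy hz
      rw [← Submodule.smul_assoc, Ideal.smul_eq_mul, ← pow_succ] at h2
      exact h2

end Aux

/- STATEMENT 10: For a small 𝒜-linear Lie algebra automorphism Π of l⊗𝒜 and ξ a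
standard deformation: Π_ξ := pr_a∘Π∘I_ξ is bijective (with inverse Ψ), the map
Π▷ξ := pr_b∘Π∘I_ξ∘Ψ has image in b⊗m, I_{Π▷ξ}∘Π_ξ = Π∘I_ξ, and Π▷ξ satisfies
the standard-deformation equation. -/
theorem stmt_10
    {𝒜 : Type} [CommRing 𝒜] [Algebra K 𝒜]
    (ev : 𝒜 →ₐ[K] K) (n : ℕ) (hnil : (RingHom.ker ev.toRingHom) ^ (n + 1) = ⊥)
    (i : a →ₗ⁅K⁆ l) (hi : Function.Injective i)
    (j : b →ₗ[K] l) (prA : l →ₗ[K] a) (prB : l →ₗ[K] b)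
    (hpi : ∀ x : a, prA (i x) = x) (hpj : ∀ w : b, prB (j w) = w)
    (hpaj : ∀ w : b, prA (j w) = 0) (hpbi : ∀ x : a, prB (i x) = 0)
    (hsplit : ∀ u : l, i (prA u) + j (prB u) = u)
    (P : 𝒜 ⊗[K] l →ₗ[𝒜] 𝒜 ⊗[K] l)
    (hPbij : Function.Bijective P)
    (hPlie : ∀ u v : 𝒜 ⊗[K] l, P ⁅u, v⁆ = ⁅P u, P v⁆)
    (hPsmall : ∀ u : 𝒜 ⊗[K] l, P u - u ∈ LinearMap.ker (evMap K 𝒜 ev l))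
    (ξ : 𝒜 ⊗[K] a →ₗ[𝒜] 𝒜 ⊗[K] b)
    (hξm : ∀ x : 𝒜 ⊗[K] a, ξ x ∈ LinearMap.ker (evMap K 𝒜 ev b))
    (hstd : StdEq 𝒜 i j prA ξ) :
    Function.Bijective ((LinearMap.baseChange 𝒜 prA) ∘ₗ P ∘ₗ IxiMap 𝒜 i j ξ) ∧
    ∃ Ψ : 𝒜 ⊗[K] a →ₗ[𝒜] 𝒜 ⊗[K] a,
      ((LinearMap.baseChange 𝒜 prA) ∘ₗ P ∘ₗ IxiMap 𝒜 i j ξ) ∘ₗ Ψ = LinearMap.id ∧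
      Ψ ∘ₗ ((LinearMap.baseChange 𝒜 prA) ∘ₗ P ∘ₗ IxiMap 𝒜 i j ξ) = LinearMap.id ∧
      (∀ x : 𝒜 ⊗[K] a,
        ((LinearMap.baseChange 𝒜 prB) ∘ₗ P ∘ₗ (IxiMap 𝒜 i j ξ) ∘ₗ Ψ) x
          ∈ LinearMap.ker (evMap K 𝒜 ev b)) ∧
      (IxiMap 𝒜 i j ((LinearMap.baseChange 𝒜 prB) ∘ₗ P ∘ₗ (IxiMap 𝒜 i j ξ) ∘ₗ Ψ))
          ∘ₗ ((LinearMap.baseChange 𝒜 prA) ∘ₗ P ∘ₗ IxiMap 𝒜 i j ξ)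
        = P ∘ₗ IxiMap 𝒜 i j ξ ∧
      StdEq 𝒜 i j prA ((LinearMap.baseChange 𝒜 prB) ∘ₗ P ∘ₗ (IxiMap 𝒜 i j ξ) ∘ₗ Ψ) := by
  classical
  set I : Ideal 𝒜 := RingHom.ker ev.toRingHom with hIdef
  set i' := LinearMap.baseChange 𝒜 i.toLinearMap with hi'
  set j' := LinearMap.baseChange 𝒜 j with hj'
  set prA' := LinearMap.baseChange 𝒜 prA with hprA'
  set prB' := LinearMap.baseChange 𝒜 prB with hprB'
  set Iξ := IxiMap 𝒜 i j ξ with hIξ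
  set T := prA' ∘ₗ P ∘ₗ Iξ with hT
  -- base-changed splitting identities
  have cAi : ∀ x : 𝒜 ⊗[K] a, prA' (i' x) = x := by
    intro x
    have h : prA ∘ₗ i.toLinearMap = LinearMap.id := LinearMap.ext hpi
    have := congrArg (fun f => f x)
      ((LinearMap.baseChange_comp (A := 𝒜) i.toLinearMap prA).symm.trans
        (by rw [h, LinearMap.baseChange_id]))
    simpa using this
  have cAj : ∀ w : 𝒜 ⊗[K] b, prA' (j' w) = 0 := by
    intro w
    have h : prA ∘ₗ j = 0 := LinearMap.ext hpaj
    have := congrArg (fun f => f w)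
      ((LinearMap.baseChange_comp (A := 𝒜) j prA).symm.trans
        (by rw [h, LinearMap.baseChange_zero]))
    simpa using this
  have cBj : ∀ w : 𝒜 ⊗[K] b, prB' (j' w) = w := by
    intro w
    have h : prB ∘ₗ j = LinearMap.id := LinearMap.ext hpj
    have := congrArg (fun f => f w)
      ((LinearMap.baseChange_comp (A := 𝒜) j prB).symm.trans
        (by rw [h, LinearMap.baseChange_id]))
    simpa using this
  have cBi : ∀ x : 𝒜 ⊗[K] a, prB' (i' x) = 0 := by
    intro x
    have h : prB ∘ₗ i.toLinearMap = 0 := LinearMap.ext hpbi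
    have := congrArg (fun f => f x)
      ((LinearMap.baseChange_comp (A := 𝒜) i.toLinearMap prB).symm.trans
        (by rw [h, LinearMap.baseChange_zero]))
    simpa using this
  have csplit : ∀ u : 𝒜 ⊗[K] l, i' (prA' u) + j' (prB' u) = u := by
    intro u
    have h : i.toLinearMap ∘ₗ prA + j ∘ₗ prB = LinearMap.id := LinearMap.ext hsplit
    have h2 : i' ∘ₗ prA' + j' ∘ₗ prB' = LinearMap.id := by
      rw [hi', hj', hprA', hprB', ← LinearMap.baseChange_comp, ← LinearMap.baseChange_comp,
        ← LinearMap.baseChange_add, h, LinearMap.baseChange_id]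
    have := congrArg (fun f => f u) h2
    simpa using this
  have hIξ_apply : ∀ x : 𝒜 ⊗[K] a, Iξ x = i' x + j' (ξ x) := by
    intro x; simp [hIξ, IxiMap, hi', hj']
  -- prA' ∘ Iξ = id, prB' ∘ Iξ = ξ
  have hAIξ : ∀ x : 𝒜 ⊗[K] a, prA' (Iξ x) = x := by
    intro x; rw [hIξ_apply, map_add, cAi, cAj, add_zero]
  have hBIξ : ∀ x : 𝒜 ⊗[K] a, prB' (Iξ x) = ξ x := by
    intro x; rw [hIξ_apply, map_add, cBi, cBj, zero_add]
  -- smallness of 1 - T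
  have hsmallT : ∀ x : 𝒜 ⊗[K] a,
      ((1 : Module.End 𝒜 (𝒜 ⊗[K] a)) - T) x ∈ (I • ⊤ : Submodule 𝒜 (𝒜 ⊗[K] a)) := by
    intro x
    have h1 : ((1 : Module.End 𝒜 (𝒜 ⊗[K] a)) - T) x = x - prA' (P (Iξ x)) := by
      simp [hT, LinearMap.sub_apply]
    have h2 : x - prA' (P (Iξ x)) = - prA' (P (Iξ x) - Iξ x) := by
      rw [map_sub, hAIξ]; abel
    rw [h1, h2]
    refine neg_mem ?_
    have := (mem_ker_evMap_iff ev l (P (Iξ x) - Iξ x)).mp (hPsmall (Iξ x))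
    exact baseChange_mem_smul_top ev prA this
  -- nilpotency of 1 - T
  have hnilT : ((1 : Module.End 𝒜 (𝒜 ⊗[K] a)) - T) ^ (n + 1) = 0 := by
    apply LinearMap.ext
    intro x
    have := pow_small I ((1 : Module.End 𝒜 (𝒜 ⊗[K] a)) - T) hsmallT n x
    rw [hnil, Submodule.bot_smul, Submodule.mem_bot] at this
    simpa using this
  -- geometric series inverse
  set Ψ : Module.End 𝒜 (𝒜 ⊗[K] a) :=
    ∑ k ∈ Finset.range (n + 1), ((1 : Module.End 𝒜 (𝒜 ⊗[K] a)) - T) ^ k with hΨ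
  have hTΨ : T * Ψ = 1 := by
    have := mul_neg_geom_sum ((1 : Module.End 𝒜 (𝒜 ⊗[K] a)) - T) (n + 1)
    rw [sub_sub_cancel, hnilT, sub_zero] at this
    exact this
  have hΨT : Ψ * T = 1 := by
    have := geom_sum_mul_neg ((1 : Module.End 𝒜 (𝒜 ⊗[K] a)) - T) (n + 1)
    rw [sub_sub_cancel, hnilT, sub_zero] at this
    exact this
  have hTΨ_x : ∀ x, T (Ψ x) = x := by
    intro x
    have := congrArg (fun f : Module.End 𝒜 (𝒜 ⊗[K] a) => f x) hTΨ
    simpa [Module.End.mul_apply] using this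
  have hΨT_x : ∀ x, Ψ (T x) = x := by
    intro x
    have := congrArg (fun f : Module.End 𝒜 (𝒜 ⊗[K] a) => f x) hΨT
    simpa [Module.End.mul_apply] using this
  have hbij : Function.Bijective T :=
    ⟨Function.LeftInverse.injective hΨT_x, Function.RightInverse.surjective hTΨ_x⟩
  set η := prB' ∘ₗ P ∘ₗ Iξ ∘ₗ Ψ with hη
  have hη_apply : ∀ x : 𝒜 ⊗[K] a, η x = prB' (P (Iξ (Ψ x))) := by
    intro x; simp [hη]
  -- key identity: I_η ∘ T = P ∘ Iξ pointwise
  have hkey : ∀ z : 𝒜 ⊗[K] a, IxiMap 𝒜 i j η (T z) = P (Iξ z) := by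
    intro z
    have h1 : IxiMap 𝒜 i j η (T z) = i' (T z) + j' (η (T z)) := by
      simp [IxiMap, hi', hj']
    have h2 : η (T z) = prB' (P (Iξ z)) := by
      rw [hη_apply, hΨT_x]
    have h3 : i' (T z) = i' (prA' (P (Iξ z))) := by
      simp [hT]
    rw [h1, h2, h3]
    exact csplit (P (Iξ z))
  -- membership of η in the maximal ideal part
  have hηm : ∀ x : 𝒜 ⊗[K] a, η x ∈ LinearMap.ker (evMap K 𝒜 ev b) := by
    intro x
    rw [mem_ker_evMap_iff]
    have h1 : η x = prB' (P (Iξ (Ψ x)) - Iξ (Ψ x)) + ξ (Ψ x) := by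
      rw [hη_apply, ← hBIξ (Ψ x), ← map_add]
      congr 1
      abel
    rw [h1]
    refine add_mem ?_ ?_
    · exact baseChange_mem_smul_top ev prB
        ((mem_ker_evMap_iff ev l _).mp (hPsmall (Iξ (Ψ x))))
    · exact (mem_ker_evMap_iff ev b _).mp (hξm (Ψ x))
  refine ⟨hbij, Ψ, ?_, ?_, hηm, ?_, ?_⟩
  · exact LinearMap.ext fun x => hTΨ_x x
  · exact LinearMap.ext fun x => hΨT_x x
  · exact LinearMap.ext fun z => hkey z
  · -- StdEq for η
    intro x' y'
    have e1 : IxiMap 𝒜 i j η x' = P (Iξ (Ψ x')) := by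
      have := hkey (Ψ x')
      rwa [hTΨ_x] at this
    have e2 : IxiMap 𝒜 i j η y' = P (Iξ (Ψ y')) := by
      have := hkey (Ψ y')
      rwa [hTΨ_x] at this
    rw [e1, e2, ← hPlie]
    rw [← hstd (Ψ x') (Ψ y')]
    set z := prA' ⁅Iξ (Ψ x'), Iξ (Ψ y')⁆ with hz
    have h4 : prA' (P (Iξ z)) = T z := by simp [hT]
    rw [h4]
    exact hkey z
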